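/- Let AF = ⟨AR, attacks⟩ be a finite argumentation framework and define Λ_AF = ⋃_{a∈AR} ( Γ(a) ∪ { a ← ¬d(a) } ), where Γ(a) = { d(a) ∨ d(b) | (b,a) ∈ attacks } ∪ { d(a) ← ⋀_{c:(c,b)∈attacks} d(c) | (b,a) ∈ attacks }. Then for S ⊆ AR: S is a preferred extension of AF if and only if there is a stable model M of Λ_AF such that S = M ∩ AR. -/
import Mathlib


inductive PForm (α : Type) where
  | atom : α → PForm α
  | tru : PForm α
  | fls : PForm α
  | neg : PForm α → PForm α
  | conj : PForm α → PForm α → PForm α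
  | disj : PForm α → PForm α → PForm α
  | impl : PForm α → PForm α → PForm α
deriving DecidableEq

def PForm.eval {α : Type} (M : Set α) : PForm α → Prop
  | .atom a => a ∈ M
  | .tru => True
  | .fls => False
  | .neg φ => ¬ PForm.eval M φ
  | .conj φ ψ => PForm.eval M φ ∧ PForm.eval M ψ
  | .disj φ ψ => PForm.eval M φ ∨ PForm.eval M ψ
  | .impl φ ψ => PForm.eval M φ → PForm.eval M ψ

def PForm.subst {α β : Type} (σ : α → PForm β) : PForm α → PForm β
  | .atom a => σ a
  | .tru => .tru
  | .fls => .fls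
  | .neg φ => .neg (PForm.subst σ φ)
  | .conj φ ψ => .conj (PForm.subst σ φ) (PForm.subst σ ψ)
  | .disj φ ψ => .disj (PForm.subst σ φ) (PForm.subst σ ψ)
  | .impl φ ψ => .impl (PForm.subst σ φ) (PForm.subst σ ψ)

def ModelOf {α : Type} (M : Set α) (T : Set (PForm α)) : Prop := ∀ φ ∈ T, PForm.eval M φ

def MinimalModel {α : Type} (M : Set α) (T : Set (PForm α)) : Prop :=
  ModelOf M T ∧ ∀ M', ModelOf M' T → M' ⊆ M → M' = M

def MaximalModel {α : Type} (M : Set α) (T : Set (PForm α)) : Prop :=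
  ModelOf M T ∧ ∀ M', ModelOf M' T → M ⊆ M' → M' = M

noncomputable def bigConj {ι α : Type} (s : Finset ι) (f : ι → PForm α) : PForm α :=
  (s.toList.map f).foldr PForm.conj PForm.tru

noncomputable def bigDisj {ι α : Type} (s : Finset ι) (f : ι → PForm α) : PForm α :=
  (s.toList.map f).foldr PForm.disj PForm.fls

def attackers {α : Type} [DecidableEq α] (att : Finset (α × α)) (a : α) : Finset α :=
  (att.filter (fun p => p.2 = a)).image Prod.fst

def conflictFree {α : Type} (att : Finset (α × α)) (S : Set α) : Prop :=
  ∀ a ∈ S, ∀ b ∈ S, (a, b) ∉ att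

def acceptable {α : Type} (att : Finset (α × α)) (S : Set α) (a : α) : Prop :=
  ∀ b, (b, a) ∈ att → ∃ c ∈ S, (c, b) ∈ att

def admissible {α : Type} (att : Finset (α × α)) (S : Set α) : Prop :=
  conflictFree att S ∧ ∀ a ∈ S, acceptable att S a

def preferredExt {α : Type} (att : Finset (α × α)) (S : Set α) : Prop :=
  admissible att S ∧ ∀ S', admissible att S' → S ⊆ S' → S' = S

noncomputable def alphaTheory {α : Type} [DecidableEq α] (att : Finset (α × α)) : Set (PForm α) :=
  { φ | ∃ p ∈ att, φ = PForm.impl (PForm.neg (PForm.atom p.1)) (PForm.atom p.2) } ∪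
  { φ | ∃ p ∈ att, φ = PForm.impl (bigConj (attackers att p.1) PForm.atom) (PForm.atom p.2) }

noncomputable def betaTheory {α : Type} [DecidableEq α] (att : Finset (α × α)) : Set (PForm α) :=
  { φ | ∃ p ∈ att, φ = PForm.impl (PForm.atom p.2) (PForm.neg (PForm.atom p.1)) } ∪
  { φ | ∃ p ∈ att, φ = PForm.impl (PForm.atom p.2) (bigDisj (attackers att p.1) PForm.atom) }

structure Clause (α : Type) where
  head : Finset α
  pos : Finset α
  negb : Finset α

def Clause.holds {α : Type} (M : Set α) (c : Clause α) : Prop :=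
  ((∀ b ∈ c.pos, b ∈ M) ∧ (∀ b ∈ c.negb, b ∉ M)) → ∃ a ∈ c.head, a ∈ M

def ClModel {α : Type} (M : Set α) (P : Set (Clause α)) : Prop := ∀ c ∈ P, Clause.holds M c

def ClMinModel {α : Type} (M : Set α) (P : Set (Clause α)) : Prop :=
  ClModel M P ∧ ∀ M', ClModel M' P → M' ⊆ M → M' = M

def reduct {α : Type} (P : Set (Clause α)) (S : Set α) : Set (Clause α) :=
  { c' | ∃ c ∈ P, (∀ b ∈ c.negb, b ∉ S) ∧ c' = ⟨c.head, c.pos, ∅⟩ }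

def StableModel {α : Type} (S : Set α) (P : Set (Clause α)) : Prop :=
  ClMinModel S (reduct P S)

def Gamma {α : Type} [DecidableEq α] (att : Finset (α × α)) : Set (Clause α) :=
  { c | ∃ p ∈ att, c = ⟨{p.2, p.1}, ∅, ∅⟩ } ∪
  { c | ∃ p ∈ att, c = ⟨{p.2}, attackers att p.1, ∅⟩ }

def Lambda {α : Type} [DecidableEq α] (att : Finset (α × α)) : Set (Clause (α ⊕ α)) :=
  Gamma (att.image (fun p => (Sum.inr p.1, Sum.inr p.2))) ∪
  { c | ∃ a : α, c = ⟨{Sum.inl a}, ∅, {Sum.inr a}⟩ }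
section Helpers
variable {α : Type} [DecidableEq α]

lemma mem_attackers (att : Finset (α × α)) (c b : α) :
    c ∈ attackers att b ↔ (c, b) ∈ att := by
  simp only [attackers, Finset.mem_image, Finset.mem_filter]
  constructor
  · rintro ⟨p, ⟨hp, h2⟩, rfl⟩
    rw [← h2]; exact hp
  · intro h; exact ⟨(c, b), ⟨h, rfl⟩, rfl⟩

lemma clModel_gamma_iff (att : Finset (α × α)) (N : Set α) :
    ClModel N (Gamma att) ↔
      (∀ p ∈ att, p.2 ∈ N ∨ p.1 ∈ N) ∧
      (∀ p ∈ att, (∀ c ∈ attackers att p.1, c ∈ N) → p.2 ∈ N) := by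
  constructor
  · intro h
    constructor
    · intro p hp
      have := h ⟨{p.2, p.1}, ∅, ∅⟩ (Or.inl ⟨p, hp, rfl⟩)
      simpa [Clause.holds] using this
    · intro p hp hc
      have := h ⟨{p.2}, attackers att p.1, ∅⟩ (Or.inr ⟨p, hp, rfl⟩)
      simp [Clause.holds] at this
      exact this hc
  · rintro ⟨h1, h2⟩ c (⟨p, hp, rfl⟩ | ⟨p, hp, rfl⟩)
    · simpa [Clause.holds] using h1 p hp
    · simp [Clause.holds]
      exact h2 p hp

lemma modelGamma_iff_admissible (att : Finset (α × α)) (D : Set α) :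
    ClModel D (Gamma att) ↔ admissible att {a | a ∉ D} := by
  rw [clModel_gamma_iff]
  constructor
  · rintro ⟨h1, h2⟩
    constructor
    · intro a ha b hb hab
      rcases h1 (a, b) hab with h | h
      · exact hb h
      · exact ha h
    · intro a ha b hb
      by_contra hc
      push_neg at hc
      apply ha
      apply h2 (b, a) hb
      intro c hcmem
      by_contra hcD
      exact hc c hcD ((mem_attackers att c b).1 hcmem)
  · rintro ⟨hcf, hacc⟩
    constructor
    · intro p hp
      by_contra hn
      push_neg at hn
      exact hcf p.1 hn.2 p.2 hn.1 hp
    · intro p hp hall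
      by_contra h2
      obtain ⟨c, hcS, hcatt⟩ := hacc p.2 h2 p.1 hp
      exact hcS (hall c ((mem_attackers att c p.1).2 hcatt))

end Helpers

section Transfer
variable {α : Type} [DecidableEq α]

lemma attackers_inr (att : Finset (α × α)) (b : α) :
    attackers (att.image (fun p => (Sum.inr p.1, Sum.inr p.2))) (Sum.inr b : α ⊕ α)
      = (attackers att b).image Sum.inr := by
  ext x
  simp only [mem_attackers, Finset.mem_image, Finset.mem_image]
  constructor
  · rintro ⟨q, hq, heq⟩
    have h1 : (Sum.inr q.1 : α ⊕ α) = x := congrArg Prod.fst heq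
    have h2 : q.2 = b := Sum.inr.inj (congrArg Prod.snd heq)
    exact ⟨q.1, by rw [← h2]; exact hq, h1⟩
  · rintro ⟨d, hd, rfl⟩
    exact ⟨(d, b), hd, rfl⟩

lemma clModel_gammaInr (att : Finset (α × α)) (N : Set (α ⊕ α)) :
    ClModel N (Gamma (att.image (fun p => (Sum.inr p.1, Sum.inr p.2)))) ↔
      ClModel {a | Sum.inr a ∈ N} (Gamma att) := by
  rw [clModel_gamma_iff, clModel_gamma_iff]
  simp only [Finset.mem_image, Set.mem_setOf_eq]
  constructor
  · rintro ⟨h1, h2⟩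
    refine ⟨fun p hp => h1 _ ⟨p, hp, rfl⟩, fun p hp hc => h2 _ ⟨p, hp, rfl⟩ ?_⟩
    intro c hcmem
    rw [attackers_inr] at hcmem
    obtain ⟨d, hd, rfl⟩ := Finset.mem_image.1 hcmem
    exact hc d hd
  · rintro ⟨h1, h2⟩
    constructor
    · rintro p ⟨q, hq, rfl⟩
      exact h1 q hq
    · rintro p ⟨q, hq, rfl⟩ hc
      refine h2 q hq fun c hcmem => ?_
      exact hc _ (by rw [attackers_inr]; exact Finset.mem_image_of_mem _ hcmem)

lemma gamma_eta {att2 : Finset ((α ⊕ α) × (α ⊕ α))} {c : Clause (α ⊕ α)}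
    (hc : c ∈ Gamma att2) : c = ⟨c.head, c.pos, ∅⟩ := by
  rcases hc with ⟨p, hp, rfl⟩ | ⟨p, hp, rfl⟩ <;> rfl

lemma gamma_negb {att2 : Finset ((α ⊕ α) × (α ⊕ α))} {c : Clause (α ⊕ α)}
    (hc : c ∈ Gamma att2) : c.negb = ∅ := by
  rcases hc with ⟨p, hp, rfl⟩ | ⟨p, hp, rfl⟩ <;> rfl

lemma model_reduct_iff (att : Finset (α × α)) (M N : Set (α ⊕ α)) :
    ClModel N (reduct (Lambda att) M) ↔
      ClModel {a | Sum.inr a ∈ N} (Gamma att) ∧ ∀ a, Sum.inr a ∉ M → Sum.inl a ∈ N := by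
  rw [← clModel_gammaInr]
  constructor
  · intro h
    constructor
    · intro c hc
      exact h c ⟨c, Or.inl hc, by simp [gamma_negb hc], (gamma_eta hc)⟩
    · intro a ha
      have := h ⟨{Sum.inl a}, ∅, ∅⟩
        ⟨⟨{Sum.inl a}, ∅, {Sum.inr a}⟩, Or.inr ⟨a, rfl⟩, by simpa using ha, rfl⟩
      simpa [Clause.holds] using this
  · rintro ⟨h1, h2⟩ c' ⟨c, hmem, hneg, rfl⟩
    rcases hmem with hc | ⟨a, rfl⟩
    · rw [← gamma_eta hc]
      exact h1 c hc
    · simp only [Clause.holds, Finset.notMem_empty, false_implies, implies_true, true_and]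
      intro _
      exact ⟨Sum.inl a, Finset.mem_singleton_self _, h2 a (by simpa using hneg)⟩

end Transfer
theorem stmt10 {α : Type} [DecidableEq α] [Fintype α] (att : Finset (α × α)) (S : Set α) :
    preferredExt att S ↔
      ∃ M : Set (α ⊕ α), StableModel M (Lambda att) ∧ S = { a | Sum.inl a ∈ M } := by
  have compl_compl : ∀ T : Set α, {a | a ∉ {a : α | a ∉ T}} = T := by
    intro T; ext a; simp
  constructor
  · rintro ⟨hadm, hmax⟩
    refine ⟨{x | Sum.elim (· ∈ S) (· ∉ S) x}, ⟨?_, ?_⟩, ?_⟩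
    · rw [model_reduct_iff]
      constructor
      · have h0 : ({a | Sum.inr a ∈ {x | Sum.elim (· ∈ S) (· ∉ S) x}} : Set α)
            = {a : α | a ∉ S} := rfl
        rw [h0, modelGamma_iff_admissible, compl_compl]
        exact hadm
      · intro a ha
        exact not_not.mp ha
    · intro N hN hsub
      rw [model_reduct_iff] at hN
      obtain ⟨hNg, hNf⟩ := hN
      have hNr_sub : {a | Sum.inr a ∈ N} ⊆ {a : α | a ∉ S} := fun a ha => hsub ha
      have hadm' : admissible att {a | a ∉ {a | Sum.inr a ∈ N}} :=
        (modelGamma_iff_admissible att _).1 hNg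
      have hSsub : S ⊆ {a | a ∉ {a | Sum.inr a ∈ N}} := fun a ha hna => hNr_sub hna ha
      have hEq := hmax _ hadm' hSsub
      have hDeq : {a | Sum.inr a ∈ N} = {a : α | a ∉ S} := by
        ext a
        constructor
        · intro h hs
          have h2 : a ∈ {a | a ∉ {a | Sum.inr a ∈ N}} := hEq.symm ▸ hs
          exact h2 h
        · intro h
          by_contra hn
          exact h (hEq ▸ (hn : a ∈ {a | a ∉ {a | Sum.inr a ∈ N}}))
      ext x
      cases x with
      | inl a =>
        constructor
        · intro h; exact hsub h
        · intro h; exact hNf a (not_not.mpr h)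
      | inr a =>
        exact Set.ext_iff.1 hDeq a
    · rfl
  · rintro ⟨M, ⟨hM, hmin⟩, rfl⟩
    rw [model_reduct_iff] at hM
    obtain ⟨hMg, hMf⟩ := hM
    have key : ∀ a, Sum.inl a ∈ M ↔ Sum.inr a ∉ M := by
      have hN : ClModel {x | Sum.elim (fun a => Sum.inr a ∉ M) (fun a => Sum.inr a ∈ M) x}
          (reduct (Lambda att) M) := by
        rw [model_reduct_iff]
        exact ⟨hMg, fun a ha => ha⟩
      have hsub : {x | Sum.elim (fun a => Sum.inr a ∉ M) (fun a => Sum.inr a ∈ M) x} ⊆ M := by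
        rintro (a | a) h
        · exact hMf a h
        · exact h
      have hEq := hmin _ hN hsub
      intro a
      constructor
      · intro h; rw [← hEq] at h; exact h
      · intro h; rw [← hEq]; exact h
    constructor
    · have hS0 : {a | Sum.inl a ∈ M} = {a | a ∉ {a | Sum.inr a ∈ M}} := by
        ext a; exact key a
      rw [hS0]
      exact (modelGamma_iff_admissible att _).1 hMg
    · intro S' hS' hsub'
      have hN' : ClModel {x | Sum.elim (fun a => Sum.inr a ∉ M) (fun a => a ∉ S') x}
          (reduct (Lambda att) M) := by
        rw [model_reduct_iff]
        refine ⟨?_, fun a ha => ha⟩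
        have h0 : ({a | Sum.inr a ∈
            {x | Sum.elim (fun a => Sum.inr a ∉ M) (fun a => a ∉ S') x}} : Set α)
            = {a : α | a ∉ S'} := rfl
        rw [h0, modelGamma_iff_admissible, compl_compl]
        exact hS'
      have hsubM : {x | Sum.elim (fun a => Sum.inr a ∉ M) (fun a => a ∉ S') x} ⊆ M := by
        rintro (a | a) h
        · exact hMf a h
        · have h2 : a ∉ {a | Sum.inl a ∈ M} := fun hx => h (hsub' hx)
          exact not_not.mp fun hn => h2 ((key a).2 hn)
      have hEq := hmin _ hN' hsubM
      ext a
      have h1 : Sum.inr a ∈ M ↔ a ∉ S' := by rw [← hEq]; exact Iff.rfl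
      constructor
      · intro haS'
        exact (key a).2 fun hm => (h1.1 hm) haS'
      · intro hM1
        by_contra hn
        exact (key a).1 hM1 (h1.2 hn)
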